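/- Let T(t) be a family of bounded operators on a Banach space, r-times differentiable in operator norm, with λ − T(t) invertible. Then for every k ≥ 1 and r ≥ 1, the r-th derivative ∂_t^r (λ − T(t))^{-k} is a finite linear combination with universal rational coefficients of terms of the form (λ−T)^{-k_0} (∂_t^{r_1} T) (λ−T)^{-k_1} ⋯ (∂_t^{r_j} T) (λ−T)^{-k_j}, where k_0 + ⋯ + k_j = k + j, r_1 + ⋯ + r_j = r, and each r_i ≥ 1. -/

import Mathlib

/-!
Write `R = (λ - T)⁻¹`. Then `R' = R T' R`, and `(T⁽ᵐ⁾)' = T⁽ᵐ⁺¹⁾`, so by the Leibniz rule the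
derivative of a word `R^k₀ T⁽ʳ¹⁾ R^k₁ ⋯ T⁽ʳʲ⁾ R^kⱼ` is a sum of words of the same shape: a letter
`T⁽ʳⁱ⁾` becomes `T⁽ʳⁱ⁺¹⁾`, or a power `R^m` becomes `R^a T' R^b` with `a + b = m + 1`. Both moves
preserve `∑ kᵢ - j` and raise `∑ rᵢ` by one. Starting from the single word `R^k` and
differentiating `r` times expresses `∂ₜ^r R^k` as a sum of admissible words, each with
coefficient one.
-/

lemma ContDiff.hasDerivAt_iteratedDeriv {𝕜 E : Type*} [NontriviallyNormedField 𝕜]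
    [NormedAddCommGroup E] [NormedSpace 𝕜 E] {f : 𝕜 → E} {n m : ℕ} (hf : ContDiff 𝕜 n f)
    (hm : m < n) (t : 𝕜) :
    HasDerivAt (iteratedDeriv m f) (iteratedDeriv (m + 1) f t) t := by
  rw [iteratedDeriv_succ]
  exact (hf.differentiable_iteratedDeriv m (mod_cast hm) t).hasDerivAt

lemma hasDerivAt_ringInverse_sub {𝕜 A : Type*} [NontriviallyNormedField 𝕜] [NormedRing A]
    [NormedAlgebra 𝕜 A] [HasSummableGeomSeries A] {T : 𝕜 → A} {T' a : A} {t : 𝕜}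
    (hT : HasDerivAt T T' t) (hu : IsUnit (a - T t)) :
    HasDerivAt (fun s => Ring.inverse (a - T s))
      (Ring.inverse (a - T t) * T' * Ring.inverse (a - T t)) t := by
  obtain ⟨u, hu⟩ := hu
  have h := (hasFDerivAt_ringInverse (𝕜 := 𝕜) u).comp_hasDerivAt_of_eq t
    ((hasDerivAt_const t a).fun_sub hT) hu
  simpa [← hu, Function.comp_def] using h

namespace ResolventExpansion

/-- `(k₀, [(r₁, k₁), …, (r_j, k_j)])` encodes `R ^ k₀ * D r₁ * R ^ k₁ * ⋯ * D r_j * R ^ k_j`. -/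
abbrev Word := ℕ × List (ℕ × ℕ)

/-- `(R ^ m)' = ∑ R ^ a * T' * R ^ b` over these pairs `(a, b)`, when `R' = R * T' * R`. -/
def derivPow (m : ℕ) : List (ℕ × ℕ) :=
  (List.range m).map fun i => (m - i, i + 1)

def derivTail : List (ℕ × ℕ) → List (List (ℕ × ℕ))
  | [] => []
  | (r, k) :: L =>
      ((r + 1, k) :: L) :: ((derivPow k).map fun p => (r, p.1) :: (1, p.2) :: L) ++
        (derivTail L).map ((r, k) :: ·)

def derivWord (w : Word) : List Word :=
  (derivPow w.1).map (fun p => (p.1, (1, p.2) :: w.2)) ++ (derivTail w.2).map (w.1, ·)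

def expansion (k : ℕ) : ℕ → List Word
  | 0 => [(k, [])]
  | r + 1 => (expansion k r).flatMap derivWord

/-- Membership in the index set `I_{k,r}` of the paper. -/
def IsAdmissible (k r : ℕ) (w : Word) : Prop :=
  w.1 + (w.2.map Prod.snd).sum = k + w.2.length ∧ (w.2.map Prod.fst).sum = r ∧
    ∀ p ∈ w.2, 1 ≤ p.1

lemma add_eq_of_mem_derivPow {m : ℕ} {p : ℕ × ℕ} (hp : p ∈ derivPow m) :
    p.1 + p.2 = m + 1 := by
  obtain ⟨i, hi, rfl⟩ := List.mem_map.1 hp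
  simp only [List.mem_range] at hi
  omega

lemma weights_of_mem_derivTail {L M : List (ℕ × ℕ)} (hM : M ∈ derivTail L) :
    (M.map Prod.snd).sum + L.length = (L.map Prod.snd).sum + M.length ∧
      (M.map Prod.fst).sum = (L.map Prod.fst).sum + 1 ∧
      ((∀ p ∈ L, 1 ≤ p.1) → ∀ p ∈ M, 1 ≤ p.1) := by
  induction L generalizing M with
  | nil => simp [derivTail] at hM
  | cons q L ih =>
    obtain ⟨r, k⟩ := q
    simp only [derivTail, List.mem_cons, List.mem_append, List.mem_map] at hM
    rcases hM with (rfl | ⟨p, hp, rfl⟩) | ⟨M, hM, rfl⟩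
    · refine ⟨by simp, by simp; omega, ?_⟩
      simp +contextual
    · have := add_eq_of_mem_derivPow hp
      refine ⟨by simp; omega, by simp; omega, ?_⟩
      simp +contextual
    · obtain ⟨h₁, h₂, h₃⟩ := ih hM
      refine ⟨by simp at h₁ ⊢; omega, by simp at h₂ ⊢; omega, ?_⟩
      simp only [List.mem_cons, forall_eq_or_imp]
      exact fun h => ⟨h.1, h₃ h.2⟩

lemma IsAdmissible.of_mem_derivWord {k r : ℕ} {w w' : Word} (hw : IsAdmissible k r w)
    (hw' : w' ∈ derivWord w) : IsAdmissible k (r + 1) w' := by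
  obtain ⟨h₁, h₂, h₃⟩ := hw
  simp only [derivWord, List.mem_append, List.mem_map] at hw'
  rcases hw' with ⟨p, hp, rfl⟩ | ⟨M, hM, rfl⟩
  · have := add_eq_of_mem_derivPow hp
    refine ⟨by simp; omega, by simp; omega, ?_⟩
    simpa using h₃
  · obtain ⟨g₁, g₂, g₃⟩ := weights_of_mem_derivTail hM
    exact ⟨by simp at h₁ g₁ ⊢; omega, by simp only at h₂ ⊢; omega, g₃ h₃⟩

lemma isAdmissible_of_mem_expansion {k r : ℕ} {w : Word} (hw : w ∈ expansion k r) :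
    IsAdmissible k r w := by
  induction r generalizing w with
  | zero =>
    obtain rfl := List.mem_singleton.1 hw
    simp [IsAdmissible]
  | succ r ih =>
    obtain ⟨v, hv, hw⟩ := List.mem_flatMap.1 hw
    exact (ih hv).of_mem_derivWord hw

lemma IsAdmissible.fst_le {k r : ℕ} {w : Word} (hw : IsAdmissible k r w) {p : ℕ × ℕ}
    (hp : p ∈ w.2) : p.1 ≤ r :=
  hw.2.1 ▸ List.le_sum_of_mem (List.mem_map_of_mem hp)

section Evaluation

variable {A : Type*} [Ring A]

def evalTail (R : A) (D : ℕ → A) (L : List (ℕ × ℕ)) : A :=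
  (L.map fun p => D p.1 * R ^ p.2).prod

def Word.eval (R : A) (D : ℕ → A) (w : Word) : A :=
  R ^ w.1 * evalTail R D w.2

end Evaluation

section Derivatives

variable {𝕜 A : Type*} [NontriviallyNormedField 𝕜] [NormedRing A] [NormedAlgebra 𝕜 A]

section Pointwise

variable {R : 𝕜 → A} {D : ℕ → 𝕜 → A} {t : 𝕜}

lemma hasDerivAt_pow_derivPow {T' : A} (hR : HasDerivAt R (R t * T' * R t) t) (m : ℕ) :
    HasDerivAt (fun s => R s ^ m)
      ((derivPow m).map fun p => R t ^ p.1 * T' * R t ^ p.2).sum t := by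
  convert hR.fun_pow' m using 1
  rw [Finset.sum_eq_multiset_sum, Finset.range_val, Multiset.range, Multiset.map_coe,
    Multiset.sum_coe, derivPow, List.map_map]
  refine congrArg List.sum (List.map_congr_left fun i hi => ?_)
  have hi : m - i = m.pred - i + 1 := by
    rw [List.mem_range] at hi
    rw [Nat.pred_eq_sub_one]
    omega
  rw [Function.comp_apply, hi, pow_succ (R t) (m.pred - i), pow_succ' (R t) i]
  simp only [mul_assoc]

variable {n : ℕ} (hR : HasDerivAt R (R t * D 1 t * R t) t)
  (hD : ∀ m < n, HasDerivAt (D m) (D (m + 1) t) t)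
include hR hD

lemma hasDerivAt_evalTail {L : List (ℕ × ℕ)} (hL : ∀ p ∈ L, p.1 < n) :
    HasDerivAt (fun s => evalTail (R s) (D · s) L)
      ((derivTail L).map (evalTail (R t) (D · t))).sum t := by
  induction L with
  | nil => simpa [evalTail, derivTail] using hasDerivAt_const t (1 : A)
  | cons q L ih =>
    obtain ⟨r, k⟩ := q
    simp only [List.mem_cons, forall_eq_or_imp] at hL
    refine (((hD r hL.1).fun_mul (hasDerivAt_pow_derivPow hR k)).fun_mul
      (ih hL.2)).congr_deriv ?_
    simp only [derivTail, evalTail, List.map_cons, List.map_append, List.map_map,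
      Function.comp_def, List.prod_cons, List.sum_cons, List.sum_append, add_mul,
      ← List.sum_map_mul_left, ← List.sum_map_mul_right, mul_assoc]

lemma Word.hasDerivAt_eval {w : Word} (hw : ∀ p ∈ w.2, p.1 < n) :
    HasDerivAt (fun s => w.eval (R s) (D · s))
      ((derivWord w).map (Word.eval (R t) (D · t))).sum t := by
  refine ((hasDerivAt_pow_derivPow hR w.1).fun_mul
    (hasDerivAt_evalTail hR hD hw)).congr_deriv ?_
  simp only [derivWord, Word.eval, evalTail, List.map_append, List.map_map, Function.comp_def,
    List.map_cons, List.prod_cons, List.sum_append, ← List.sum_map_mul_left,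
    ← List.sum_map_mul_right, mul_assoc]

end Pointwise

lemma iteratedDeriv_pow_eq_sum_expansion {R : 𝕜 → A} {D : ℕ → 𝕜 → A} {n : ℕ}
    (hR : ∀ t, HasDerivAt R (R t * D 1 t * R t) t)
    (hD : ∀ m < n, ∀ t, HasDerivAt (D m) (D (m + 1) t) t) (k : ℕ) {m : ℕ} (hm : m ≤ n) (t : 𝕜) :
    iteratedDeriv m (fun s => R s ^ k) t =
      ((expansion k m).map (Word.eval (R t) (D · t))).sum := by
  induction m generalizing t with
  | zero => simp [expansion, Word.eval, evalTail]
  | succ m ih =>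
    have hsum : HasDerivAt (fun s => ((expansion k m).map (Word.eval (R s) (D · s))).sum)
        ((expansion k m).map fun w => ((derivWord w).map (Word.eval (R t) (D · t))).sum).sum t := by
      simp only [← Fin.sum_univ_fun_getElem (expansion k m)]
      refine HasDerivAt.fun_sum fun i _ =>
        Word.hasDerivAt_eval (hR t) (fun m' hm' => hD m' hm' t) fun p hp => ?_
      have := (isAdmissible_of_mem_expansion (List.getElem_mem i.2)).fst_le hp
      omega
    rw [iteratedDeriv_succ, funext (ih (by omega)), hsum.deriv, expansion, List.flatMap]
    simp only [List.map_flatten, List.sum_flatten, List.map_map]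
    rfl

theorem iteratedDeriv_inverse_sub_pow_eq_sum_expansion [HasSummableGeomSeries A] {T : 𝕜 → A}
    {a : A} {n : ℕ} (hT : ContDiff 𝕜 n T) (hu : ∀ t, IsUnit (a - T t)) (k : ℕ) (t : 𝕜) :
    iteratedDeriv n (fun s => Ring.inverse (a - T s) ^ k) t =
      ((expansion k n).map (Word.eval (Ring.inverse (a - T t)) (iteratedDeriv · T t))).sum := by
  rcases Nat.eq_zero_or_pos n with rfl | hn
  · simp [expansion, Word.eval, evalTail]
  have hR (t : 𝕜) : HasDerivAt (fun s => Ring.inverse (a - T s))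
      (Ring.inverse (a - T t) * iteratedDeriv 1 T t * Ring.inverse (a - T t)) t :=
    hasDerivAt_ringInverse_sub (by simpa using hT.hasDerivAt_iteratedDeriv hn t) (hu t)
  exact iteratedDeriv_pow_eq_sum_expansion (D := (iteratedDeriv · T)) hR
    (fun m hm => hT.hasDerivAt_iteratedDeriv hm) k le_rfl t

end Derivatives

namespace Word

/-- `ks l = k_l` and `rs l = r_{l+1}`, padded with zeros. -/
def ks (w : Word) (l : ℕ) : ℕ := (w.1 :: w.2.map Prod.snd).getD l 0

def rs (w : Word) (l : ℕ) : ℕ := (w.2.map Prod.fst).getD l 0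

lemma sum_ks (w : Word) :
    ∑ l ∈ Finset.range (w.2.length + 1), w.ks l = w.1 + (w.2.map Prod.snd).sum := by
  rw [Finset.sum_range_succ', add_comm, Finset.sum_range, ← Fin.sum_univ_fun_getElem]
  simp [ks]

lemma sum_rs (w : Word) : ∑ l ∈ Finset.range w.2.length, w.rs l = (w.2.map Prod.fst).sum := by
  rw [Finset.sum_range, ← Fin.sum_univ_fun_getElem]
  simp [rs]

lemma eval_eq_pow_mul_prod_ofFn {A : Type*} [Ring A] (R : A) (D : ℕ → A) (w : Word) :
    w.eval R D = R ^ w.ks 0 *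
      (List.ofFn fun l : Fin w.2.length => D (w.rs l) * R ^ w.ks (l + 1)).prod := by
  rw [eval, evalTail, ← List.ofFn_getElem_eq_map]
  simp [ks, rs]

end Word

lemma IsAdmissible.one_le_rs {k r : ℕ} {w : Word} (hw : IsAdmissible k r w) {l : ℕ}
    (hl : l < w.2.length) : 1 ≤ w.rs l := by
  simpa [Word.rs, hl] using hw.2.2 _ (List.getElem_mem hl)

end ResolventExpansion

open ResolventExpansion

theorem iteratedDeriv_resolvent_power_general
    {X : Type*} [NormedAddCommGroup X] [NormedSpace ℂ X] [CompleteSpace X]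
    (lam : ℂ) (k r : ℕ) :
    ∃ (N : ℕ) (a : Fin N → ℚ) (j : Fin N → ℕ) (ks rs : Fin N → ℕ → ℕ),
      (∀ i, ∑ l ∈ Finset.range (j i + 1), ks i l = k + j i) ∧
      (∀ i, ∑ l ∈ Finset.range (j i), rs i l = r) ∧
      (∀ i, ∀ l < j i, 1 ≤ rs i l) ∧
      ∀ (T : ℝ → (X →L[ℂ] X)), ContDiff ℝ r T →
        (∀ t, IsUnit (lam • (1 : X →L[ℂ] X) - T t)) →
        ∀ t₀ : ℝ,
          iteratedDeriv r (fun t => (Ring.inverse (lam • (1 : X →L[ℂ] X) - T t)) ^ k) t₀ =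
            ∑ i : Fin N, (a i : ℝ) •
              ((Ring.inverse (lam • (1 : X →L[ℂ] X) - T t₀)) ^ (ks i 0) *
                (List.ofFn (fun l : Fin (j i) =>
                  iteratedDeriv (rs i l) T t₀ *
                    (Ring.inverse (lam • (1 : X →L[ℂ] X) - T t₀)) ^ (ks i (l + 1)))).prod) := by
  let W := expansion k r
  have hW (i : Fin W.length) : IsAdmissible k r W[i] :=
    isAdmissible_of_mem_expansion (List.getElem_mem i.2)
  refine ⟨W.length, 1, fun i => W[i].2.length, fun i => W[i].ks, fun i => W[i].rs,
    fun i => ?_, fun i => ?_, fun i l hl => (hW i).one_le_rs hl, fun T hT hu t => ?_⟩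
  · rw [Word.sum_ks]
    exact (hW i).1
  · rw [Word.sum_rs]
    exact (hW i).2.1
  · rw [iteratedDeriv_inverse_sub_pow_eq_sum_expansion hT hu, ← Fin.sum_univ_fun_getElem]
    simp only [Pi.one_apply, Rat.cast_one, one_smul, Fin.getElem_fin,
      Word.eval_eq_pow_mul_prod_ofFn]
    rfl

/-- The `r`-th derivative of the `k`-th power of the resolvent is a universal finite linear
combination (with rational coefficients independent of `T`) of words
`(λ-T)^{-k₀} (∂ₜ^{r₁}T) (λ-T)^{-k₁} ⋯ (∂ₜ^{r_j}T) (λ-T)^{-k_j}` with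
`k₀+⋯+k_j = k+j`, `r₁+⋯+r_j = r` and `rᵢ ≥ 1`. -/
theorem iteratedDeriv_resolvent_power
    {X : Type*} [NormedAddCommGroup X] [NormedSpace ℂ X] [CompleteSpace X]
    (lam : ℂ) (k r : ℕ) (hk : 1 ≤ k) (hr : 1 ≤ r) :
    ∃ (N : ℕ) (a : Fin N → ℚ) (j : Fin N → ℕ) (ks rs : Fin N → ℕ → ℕ),
      (∀ i, ∑ l ∈ Finset.range (j i + 1), ks i l = k + j i) ∧
      (∀ i, ∑ l ∈ Finset.range (j i), rs i l = r) ∧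
      (∀ i, ∀ l < j i, 1 ≤ rs i l) ∧
      ∀ (T : ℝ → (X →L[ℂ] X)), ContDiff ℝ r T →
        (∀ t, IsUnit (lam • (1 : X →L[ℂ] X) - T t)) →
        ∀ t₀ : ℝ,
          iteratedDeriv r (fun t => (Ring.inverse (lam • (1 : X →L[ℂ] X) - T t)) ^ k) t₀ =
            ∑ i : Fin N, (a i : ℝ) •
              ((Ring.inverse (lam • (1 : X →L[ℂ] X) - T t₀)) ^ (ks i 0) *
                (List.ofFn (fun l : Fin (j i) =>
                  iteratedDeriv (rs i l) T t₀ *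
                    (Ring.inverse (lam • (1 : X →L[ℂ] X) - T t₀)) ^ (ks i (l + 1)))).prod) :=
  iteratedDeriv_resolvent_power_general lam k r
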